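/- Let σ(X) = -Xᵀ on gl_N(ℂ) and let o_N^{tw}[s,s⁻¹] be the twisted loop algebra of fixed points of Θ(X ⊗ s^r) = σ(X) ⊗ s^{-r}. For each m ≥ 0, the ℂ-span K_m^{tw} of the elements E_{ij} s^r (s-1)^m - E_{ji} s^{-r} (s⁻¹ - 1)^m, for all 1 ≤ i,j ≤ N and r ∈ ℤ, is a Lie ideal of o_N^{tw}[s,s⁻¹]. -/

import Mathlib

/-! The span `K_m^{tw}` is the image of the ideal `(s-1)^m gl_N[s,s⁻¹]` of the loop algebra under
`a ↦ a + Θ a`: the generator indexed by `(i, j, r)` is the image of `s^r (s-1)^m E_{ij}`.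
Since `σ` reverses products up to sign, `Θ` is an involutive Lie algebra automorphism, so this
image consists of `Θ`-fixed points, and for a fixed point `y` we get
`⁅a + Θ a, y⁆ = ⁅a, y⁆ + Θ ⁅a, y⁆`. Finally `(s-1)^m` is central, so the ideal is a Lie ideal:
`⁅(s-1)^m b, y⁆ = (s-1)^m ⁅b, y⁆`. -/

open LaurentPolynomial TensorProduct Matrix

noncomputable section

/-- The involution `σ(X) = -Xᵀ` of `gl_N(ℂ)`, as a linear map. -/
def sigmaO (N : ℕ) : Matrix (Fin N) (Fin N) ℂ →ₗ[ℂ] Matrix (Fin N) (Fin N) ℂ :=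
  -(Matrix.transposeLinearEquiv (Fin N) (Fin N) ℂ ℂ).toLinearMap

/-- The twisting automorphism `Θ(X ⊗ s^r) = σ(X) ⊗ s^{-r}` of the loop algebra. -/
def ThetaO (N : ℕ) :
    ℂ[T;T⁻¹] ⊗[ℂ] Matrix (Fin N) (Fin N) ℂ →ₗ[ℂ] ℂ[T;T⁻¹] ⊗[ℂ] Matrix (Fin N) (Fin N) ℂ :=
  TensorProduct.map (LaurentPolynomial.invert : ℂ[T;T⁻¹] ≃ₐ[ℂ] ℂ[T;T⁻¹]).toLinearMap (sigmaO N)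

/-- The spanning elements `E_{ij} s^r (s-1)^m - E_{ji} s^{-r} (s⁻¹-1)^m` of `K_m^{tw}`. -/
def Ktw (N m : ℕ) : Set (ℂ[T;T⁻¹] ⊗[ℂ] Matrix (Fin N) (Fin N) ℂ) :=
  {z | ∃ (i j : Fin N) (r : ℤ),
    z = (T r * (T 1 - 1) ^ m) ⊗ₜ[ℂ] Matrix.single i j (1 : ℂ)
      - (T (-r) * (T (-1) - 1) ^ m) ⊗ₜ[ℂ] Matrix.single j i 1}

theorem Ring.smul_lie {R A : Type*} [CommSemiring R] [Ring A] [Algebra R A] (r : R) (a b : A) :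
    ⁅r • a, b⁆ = r • ⁅a, b⁆ := by
  rw [Ring.lie_def, Ring.lie_def, smul_mul_assoc, mul_smul_comm, smul_sub]

theorem map_lie_of_map_mul_eq_neg_mul {A : Type*} [Ring A] (f : A →+ A)
    (hf : ∀ a b, f (a * b) = -(f b * f a)) (a b : A) : f ⁅a, b⁆ = ⁅f a, f b⁆ := by
  rw [Ring.lie_def, Ring.lie_def, map_sub, hf, hf]
  abel

theorem lie_add_map_self_of_map_eq {A : Type*} [Ring A] (f : A →+ A)
    (hf : ∀ a b, f ⁅a, b⁆ = ⁅f a, f b⁆) {y : A} (hy : f y = y) (a : A) :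
    ⁅a + f a, y⁆ = ⁅a, y⁆ + f ⁅a, y⁆ := by
  rw [hf, hy, Ring.lie_def, Ring.lie_def, Ring.lie_def, add_mul, mul_add]
  abel

abbrev LoopGL (N : ℕ) := ℂ[T;T⁻¹] ⊗[ℂ] Matrix (Fin N) (Fin N) ℂ

section

variable {N : ℕ}

theorem ThetaO_tmul (f : ℂ[T;T⁻¹]) (X : Matrix (Fin N) (Fin N) ℂ) :
    ThetaO N (f ⊗ₜ X) = invert f ⊗ₜ (-Xᵀ) := rfl

theorem ThetaO_mul (a b : LoopGL N) : ThetaO N (a * b) = -(ThetaO N b * ThetaO N a) := by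
  induction a using TensorProduct.induction_on with
  | zero => simp
  | add a a' ha ha' => simp only [add_mul, mul_add, map_add, ha, ha', neg_add]
  | tmul f X =>
    induction b using TensorProduct.induction_on with
    | zero => simp
    | add b b' hb hb' => simp only [add_mul, mul_add, map_add, hb, hb', neg_add]
    | tmul g Y =>
      rw [Algebra.TensorProduct.tmul_mul_tmul, ThetaO_tmul, ThetaO_tmul, ThetaO_tmul,
        Algebra.TensorProduct.tmul_mul_tmul, map_mul, transpose_mul, neg_mul_neg, tmul_neg,
        mul_comm (invert f)]

theorem ThetaO_lie (a b : LoopGL N) : ThetaO N ⁅a, b⁆ = ⁅ThetaO N a, ThetaO N b⁆ :=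
  map_lie_of_map_mul_eq_neg_mul (ThetaO N).toAddMonoidHom ThetaO_mul a b

theorem ThetaO_ThetaO (a : LoopGL N) : ThetaO N (ThetaO N a) = a := by
  induction a using TensorProduct.induction_on with
  | zero => simp
  | add a a' ha ha' => rw [map_add, map_add, ha, ha']
  | tmul f X =>
    rw [ThetaO_tmul, ThetaO_tmul, transpose_neg, neg_neg, transpose_transpose,
      involutive_invert f]

def symmetrizeO (N : ℕ) : LoopGL N →ₗ[ℂ] LoopGL N := LinearMap.id + ThetaO N

theorem ThetaO_symmetrizeO (a : LoopGL N) : ThetaO N (symmetrizeO N a) = symmetrizeO N a := by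
  simp only [symmetrizeO, LinearMap.add_apply, LinearMap.id_apply, map_add, ThetaO_ThetaO,
    add_comm]

def ktwMap (N m : ℕ) : LoopGL N →ₗ[ℂ] LoopGL N :=
  symmetrizeO N ∘ₗ Algebra.lsmul ℂ ℂ (LoopGL N) ((T 1 - 1 : ℂ[T;T⁻¹]) ^ m)

theorem ktwMap_apply (m : ℕ) (b : LoopGL N) :
    ktwMap N m b = symmetrizeO N ((T 1 - 1 : ℂ[T;T⁻¹]) ^ m • b) := rfl

theorem ktwMap_tmul_single (m : ℕ) (i j : Fin N) (r : ℤ) :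
    ktwMap N m (T r ⊗ₜ single i j 1) =
      (T r * (T 1 - 1) ^ m) ⊗ₜ[ℂ] single i j (1 : ℂ)
        - (T (-r) * (T (-1) - 1) ^ m) ⊗ₜ[ℂ] single j i 1 := by
  rw [ktwMap_apply, TensorProduct.smul_tmul', smul_eq_mul, symmetrizeO, LinearMap.add_apply,
    LinearMap.id_apply, ThetaO_tmul, transpose_single, tmul_neg, ← sub_eq_add_neg, mul_comm]
  simp only [map_mul, map_pow, map_sub, invert_T, map_one]

theorem span_Ktw_eq_range_ktwMap (m : ℕ) :
    Submodule.span ℂ (Ktw N m) = LinearMap.range (ktwMap N m) := by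
  apply le_antisymm
  · rw [Submodule.span_le]
    rintro _ ⟨i, j, r, rfl⟩
    exact ⟨_, ktwMap_tmul_single m i j r⟩
  · let B := (AddMonoidAlgebra.basis ℤ ℂ).tensorProduct (stdBasis ℂ (Fin N) (Fin N))
    rw [LinearMap.range_eq_map, ← B.span_eq, Submodule.map_span]
    refine Submodule.span_mono ?_
    rintro _ ⟨_, ⟨⟨r, i, j⟩, rfl⟩, rfl⟩
    refine ⟨i, j, r, ?_⟩
    rw [← ktwMap_tmul_single, Module.Basis.tensorProduct_apply, AddMonoidAlgebra.basis_apply,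
      stdBasis_eq_single]
    rfl

theorem ktwMap_lie_of_ThetaO_eq (m : ℕ) (b : LoopGL N) {y : LoopGL N} (hy : ThetaO N y = y) :
    ⁅ktwMap N m b, y⁆ = ktwMap N m ⁅b, y⁆ := by
  rw [ktwMap_apply, ktwMap_apply, ← Ring.smul_lie]
  exact lie_add_map_self_of_map_eq (ThetaO N).toAddMonoidHom ThetaO_lie hy _

end

/-- Each spanning element `E_{ij} s^r (s-1)^m - E_{ji} s^{-r} (s⁻¹-1)^m` lies in the
twisted loop algebra `o_N^{tw}[s,s⁻¹]` (the fixed points of `Θ`), and their ℂ-span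
`K_m^{tw}` is a Lie ideal of `o_N^{tw}[s,s⁻¹]`. -/
theorem stmt_14 (N m : ℕ) :
    (∀ z ∈ Ktw N m, ThetaO N z = z) ∧
    (∀ x ∈ Submodule.span ℂ (Ktw N m),
      ∀ y : ℂ[T;T⁻¹] ⊗[ℂ] Matrix (Fin N) (Fin N) ℂ, ThetaO N y = y →
        ⁅x, y⁆ ∈ Submodule.span ℂ (Ktw N m)) := by
  rw [span_Ktw_eq_range_ktwMap]
  refine ⟨?_, ?_⟩
  · rintro z ⟨i, j, r, rfl⟩
    rw [← ktwMap_tmul_single]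
    exact ThetaO_symmetrizeO _
  · rintro _ ⟨b, rfl⟩ y hy
    exact ⟨⁅b, y⁆, (ktwMap_lie_of_ThetaO_eq m b hy).symm⟩

end
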